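/- Let G be a finite group and N a normal subgroup of G. If the quotient group G/N does not satisfy the (μ,λ)-property, then G does not satisfy the (μ,λ)-property. -/

import Mathlib

open Classical in
/-- The Möbius function of a finite partial order with a top element:
`mob ⊤ = 1` and `mob x = -∑_{x < y ≤ ⊤} mob y` for `x ≠ ⊤`. -/
noncomputable def mob {α : Type*} [PartialOrder α] [OrderTop α] [Finite α] (x : α) : ℤ :=
  if x = ⊤ then 1
  else - ∑ y ∈ (Set.toFinite {y : α | x < y}).toFinset.attach, mob y.1
termination_by (Set.toFinite {y : α | x < y}).toFinset.card
decreasing_by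
  have hy : x < y.1 := by
    have h2 := y.2
    rwa [Set.Finite.mem_toFinset] at h2
  refine Finset.card_lt_card ?_
  rw [Finset.ssubset_iff_of_subset]
  · exact ⟨y.1, by rwa [Set.Finite.mem_toFinset], by simp [Set.Finite.mem_toFinset]⟩
  · intro z hz
    rw [Set.Finite.mem_toFinset] at hz ⊢
    exact hy.trans hz

section C

variable (G : Type*) [Group G]

instance subgroupFinite [Finite G] : Finite (Subgroup G) :=
  Finite.of_injective (fun H => (H : Set G)) SetLike.coe_injective

/-- Type synonym for `Subgroup G`, endowed with the preorder `H ≼ K` iff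
`H ≤ gKg⁻¹` for some `g : G`. -/
def CSub := Subgroup G

variable {G}

/-- Conversion from `Subgroup G` to the type synonym `CSub G`. -/
def CSub.mk (H : Subgroup G) : CSub G := H

/-- Conversion from the type synonym `CSub G` to `Subgroup G`. -/
def CSub.toSubgroup (H : CSub G) : Subgroup G := H

variable (G)

instance : Preorder (CSub G) where
  le H K := ∃ g : G, H.toSubgroup ≤ K.toSubgroup.map (MulAut.conj g).toMonoidHom
  le_refl H := ⟨1, by
    simp only [map_one]
    rw [show MulEquiv.toMonoidHom (1 : MulAut G) = MonoidHom.id G from rfl, Subgroup.map_id]⟩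
  le_trans H K L := by
    rintro ⟨g, hg⟩ ⟨h, hh⟩
    refine ⟨g * h, hg.trans ?_⟩
    have hm := Subgroup.map_mono (f := (MulAut.conj g).toMonoidHom) hh
    rw [Subgroup.map_map] at hm
    refine hm.trans (le_of_eq ?_)
    congr 1
    ext x
    simp [mul_assoc]

instance [Finite G] : Finite (CSub G) := subgroupFinite G

/-- The poset of conjugacy classes of subgroups of `G`: for a finite group this is
the quotient of subgroups by conjugacy, with `[H] ≤ [K]` iff `H ≤ gKg⁻¹` for some `g ∈ G`. -/
abbrev ConjClassSub := Antisymmetrization (CSub G) (· ≤ ·)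

/-- The conjugacy class of a subgroup, as an element of `ConjClassSub G`. -/
def conjClassOf (H : Subgroup G) : ConjClassSub G :=
  toAntisymmetrization (α := CSub G) (· ≤ ·) (CSub.mk H)

instance : OrderTop (ConjClassSub G) where
  top := conjClassOf G ⊤
  le_top c := by
    induction c using Quotient.ind with
    | _ H =>
      show toAntisymmetrization (α := CSub G) (· ≤ ·) H ≤
        toAntisymmetrization (α := CSub G) (· ≤ ·) (CSub.mk ⊤)
      rw [toAntisymmetrization_le_toAntisymmetrization_iff]
      refine ⟨1, ?_⟩
      show H.toSubgroup ≤ Subgroup.map (MulAut.conj (1:G)).toMonoidHom (⊤ : Subgroup G)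
      rw [Subgroup.map_top_of_surjective _ (MulAut.conj (1:G)).surjective]
      exact le_top

instance [Finite G] : Finite (ConjClassSub G) := Quotient.finite _

variable {G}

/-- The Möbius function `μ_G` on the subgroup lattice of the finite group `G`. -/
noncomputable def muSub [Finite G] (H : Subgroup G) : ℤ := mob H

/-- The Möbius function `λ_G` on the poset of conjugacy classes of subgroups of the
finite group `G`, evaluated at the class of `H`. -/
noncomputable def lamSub [Finite G] (H : Subgroup G) : ℤ :=
  mob (conjClassOf G H)

/-- `G` satisfies the (μ,λ)-property if `μ_G(H) = [N_{G'}(H) : G' ∩ H] · λ_G(H)`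
for every subgroup `H ≤ G`, where `G' = [G,G]` and `N_{G'}(H) = N_G(H) ∩ G'`. -/
def MuLambdaProperty (G : Type*) [Group G] [Finite G] : Prop :=
  ∀ H : Subgroup G,
    muSub H =
      ((commutator G ⊓ H).relIndex (Subgroup.normalizer (H : Set G) ⊓ commutator G) : ℤ) * lamSub H

/-- `MaxInt G` consists of `G` itself (the subgroup `⊤`) together with all
intersections of nonempty families of maximal subgroups of `G`. -/
def MaxInt (G : Type*) [Group G] : Set (Subgroup G) :=
  {H | H = ⊤ ∨ ∃ S : Set (Subgroup G), S.Nonempty ∧ (∀ M ∈ S, IsCoatom M) ∧ H = sInf S}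

end C

instance {n R : Type*} [DecidableEq n] [Fintype n] [CommRing R] [Finite R] :
    Finite (Matrix.SpecialLinearGroup n R) :=
  Finite.of_injective (fun A => (A : Matrix n n R)) Subtype.coe_injective

open scoped MatrixGroups

/-!
A surjection `f : G → Q` with kernel contained in `H` identifies the interval above `H` in the
subgroup lattice of `G` with the interval above `f H` in that of `Q`, and likewise for the posets
of conjugacy classes. The Möbius function at a point only depends on the interval above it, so
`μ` and `λ` are preserved; the index `[N_{G'}(H) : G' ∩ H]` is preserved as well, because
`f` maps `G'` onto `Q'` and `N_G(H)` onto `N_Q(f H)`. Hence an `H ≤ Q` violating the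
(μ,λ)-property in `Q` pulls back to its preimage, which violates it in `G`.
-/

section Mobius

variable {α β : Type*} [PartialOrder α] [OrderTop α] [Finite α]

theorem mob_top : mob (⊤ : α) = 1 := by
  rw [mob, if_pos rfl]

theorem mob_of_ne_top {x : α} (hx : x ≠ ⊤) :
    mob x = -∑ y ∈ (Set.toFinite (Set.Ioi x)).toFinset, mob y := by
  rw [mob, if_neg hx, Finset.sum_attach _ (fun y => mob y)]
  rfl

variable [PartialOrder β] [OrderTop β] [Finite β]

theorem mob_eq_of_surjOn (f : α → β) {x : α}
    (hf : ∀ y ∈ Set.Ici x, ∀ z ∈ Set.Ici x, f y ≤ f z ↔ y ≤ z)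
    (hsurj : Set.SurjOn f (Set.Ici x) (Set.Ici (f x))) :
    mob (f x) = mob x := by
  induction x using WellFoundedGT.induction with
  | _ x ih =>
  have hlt : ∀ y ∈ Set.Ici x, f x < f y ↔ x < y := fun y hy => by
    simp only [lt_iff_le_not_ge, hf x le_rfl y hy, hf y hy x le_rfl]
  have hf_top : f ⊤ = ⊤ := by
    obtain ⟨t, ht, hft⟩ := hsurj (le_top : f x ≤ ⊤)
    exact top_le_iff.mp (hft ▸ (hf t ht ⊤ le_top).mpr le_top)
  by_cases hx : x = ⊤
  · subst hx
    rw [hf_top, mob_top, mob_top]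
  have hfx : f x ≠ ⊤ := fun h =>
    hx (top_le_iff.mp ((hf ⊤ le_top x le_rfl).mp (h ▸ hf_top).le))
  rw [mob_of_ne_top hx, mob_of_ne_top hfx, neg_inj]
  symm
  refine Finset.sum_nbij f ?_ ?_ ?_ ?_
  · intro y hy
    simp only [Set.Finite.mem_toFinset, Set.mem_Ioi] at hy ⊢
    exact (hlt y hy.le).mpr hy
  · intro y hy z hz hyz
    simp only [Finset.mem_coe, Set.Finite.mem_toFinset, Set.mem_Ioi] at hy hz
    exact le_antisymm ((hf y hy.le z hz.le).mp hyz.le) ((hf z hz.le y hy.le).mp hyz.ge)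
  · intro w hw
    simp only [Set.Finite.coe_toFinset, Set.mem_Ioi] at hw ⊢
    obtain ⟨y, hy, rfl⟩ := hsurj hw.le
    exact ⟨y, (hlt y hy).mp hw, rfl⟩
  · intro y hy
    simp only [Set.Finite.mem_toFinset, Set.mem_Ioi] at hy
    refine (ih y hy (fun z hz w hw => hf z (hy.le.trans hz) w (hy.le.trans hw)) ?_).symm
    intro w hw
    obtain ⟨z, hz, rfl⟩ := hsurj (((hlt y hy.le).mpr hy).le.trans hw)
    exact ⟨z, (hf y hy.le z hz).mp hw, rfl⟩

end Mobius

namespace Subgroup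

variable {G Q : Type*} [Group G] [Group Q] {f : G →* Q}

theorem map_le_map_iff_of_ker_le {H K : Subgroup G} (hH : f.ker ≤ H) (hK : f.ker ≤ K) :
    H.map f ≤ K.map f ↔ H ≤ K := by
  rw [map_le_map_iff', sup_eq_left.mpr hH, sup_eq_left.mpr hK]

theorem map_inf_of_ker_le (f : G →* Q) {H : Subgroup G} (K : Subgroup G) (hH : f.ker ≤ H) :
    (H ⊓ K).map f = H.map f ⊓ K.map f := by
  refine le_antisymm (map_inf_le H K f) ?_
  rintro _ ⟨⟨h, hh, rfl⟩, ⟨k, hk, hkh⟩⟩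
  have hhk : h⁻¹ * k ∈ f.ker := by simp [MonoidHom.mem_ker, hkh]
  exact ⟨k, ⟨by simpa using H.mul_mem hh (hH hhk), hk⟩, hkh⟩

theorem map_normalizer_of_ker_le (hf : Function.Surjective f) {H : Subgroup G}
    (hH : f.ker ≤ H) :
    (normalizer (H : Set G)).map f = normalizer ((H.map f : Subgroup Q) : Set Q) := by
  conv_lhs => rw [← comap_map_eq_self hH, ← comap_normalizer_eq_of_surjective _ hf]
  exact map_comap_eq_self_of_surjective hf _

theorem map_commutator_of_surjective (hf : Function.Surjective f) :
    (_root_.commutator G).map f = _root_.commutator Q := by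
  rw [map_commutator_eq, MonoidHom.range_eq_top.mpr hf, _root_.commutator_def]

theorem map_map_conj (f : G →* Q) (K : Subgroup G) (g : G) :
    (K.map (MulAut.conj g).toMonoidHom).map f =
      (K.map f).map (MulAut.conj (f g)).toMonoidHom := by
  rw [map_map, map_map]
  congr 1
  ext x
  simp

theorem Normal.le_map_conj_iff {N : Subgroup G} (hN : N.Normal) (K : Subgroup G) (g : G) :
    N ≤ K.map (MulAut.conj g).toMonoidHom ↔ N ≤ K := by
  simp only [SetLike.le_def, mem_map_equiv, MulAut.conj_symm_apply]
  refine ⟨fun h n hn => ?_, fun h n hn => h (hN.conj_mem' n hn g)⟩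
  simpa [mul_assoc] using h (hN.conj_mem n hn g)

end Subgroup

section Transfer

variable {G Q : Type*} [Group G] [Group Q] {f : G →* Q}

theorem muSub_map_eq [Finite G] [Finite Q] (hf : Function.Surjective f) {H : Subgroup G}
    (hH : f.ker ≤ H) : muSub (H.map f) = muSub H :=
  mob_eq_of_surjOn (fun K : Subgroup G => K.map f) (x := H)
    (fun _ hK _ hL => Subgroup.map_le_map_iff_of_ker_le (hH.trans hK) (hH.trans hL))
    (fun W hW => ⟨W.comap f, (H.le_comap_map f).trans (Subgroup.comap_mono hW),
      Subgroup.map_comap_eq_self_of_surjective hf W⟩)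

variable (f) in
def CSub.map : CSub G →o CSub Q where
  toFun K := CSub.mk (K.toSubgroup.map f)
  monotone' := by
    rintro K L ⟨g, hg⟩
    exact ⟨f g, Subgroup.map_map_conj f L.toSubgroup g ▸ Subgroup.map_mono hg⟩

theorem CSub.ker_le_of_le {K L : CSub G} (h : K ≤ L) (hK : f.ker ≤ K.toSubgroup) :
    f.ker ≤ L.toSubgroup := by
  obtain ⟨g, hg⟩ := h
  exact (f.normal_ker.le_map_conj_iff _ g).mp (hK.trans hg)

theorem CSub.map_le_map_iff (hf : Function.Surjective f) {K L : CSub G}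
    (hK : f.ker ≤ K.toSubgroup) (hL : f.ker ≤ L.toSubgroup) :
    CSub.map f K ≤ CSub.map f L ↔ K ≤ L := by
  refine ⟨fun ⟨q, hq⟩ => ?_, fun h => (CSub.map f).monotone h⟩
  obtain ⟨g, rfl⟩ := hf q
  refine ⟨g, (Subgroup.map_le_map_iff_of_ker_le hK ?_).mp ?_⟩
  · exact (f.normal_ker.le_map_conj_iff _ g).mpr hL
  · rwa [Subgroup.map_map_conj]

theorem lamSub_map_eq [Finite G] [Finite Q] (hf : Function.Surjective f) {H : Subgroup G}
    (hH : f.ker ≤ H) : lamSub (H.map f) = lamSub H := by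
  refine mob_eq_of_surjOn (CSub.map f).antisymmetrization (x := conjClassOf G H) ?_ ?_
  · intro c hc d hd
    induction c using Antisymmetrization.induction_on with | _ K =>
    induction d using Antisymmetrization.induction_on with | _ L =>
    simp only [Set.mem_Ici, conjClassOf, toAntisymmetrization_le_toAntisymmetrization_iff,
      OrderHom.antisymmetrization_apply_mk] at hc hd ⊢
    exact CSub.map_le_map_iff hf (CSub.ker_le_of_le hc hH) (CSub.ker_le_of_le hd hH)
  · intro w hw
    induction w using Antisymmetrization.induction_on with | _ W =>
    have hW : CSub.map f (CSub.mk (W.toSubgroup.comap f)) = W :=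
      Subgroup.map_comap_eq_self_of_surjective hf W.toSubgroup
    refine ⟨toAntisymmetrization _ (CSub.mk (W.toSubgroup.comap f)), ?_, ?_⟩
    · simp only [Set.mem_Ici, conjClassOf, toAntisymmetrization_le_toAntisymmetrization_iff,
        OrderHom.antisymmetrization_apply_mk] at hw ⊢
      exact (CSub.map_le_map_iff hf hH (Subgroup.ker_le_comap f _)).mp (hw.trans_eq hW.symm)
    · rw [OrderHom.antisymmetrization_apply_mk, hW]

theorem relIndex_commutator_inf_map_eq (hf : Function.Surjective f) {H : Subgroup G}
    (hH : f.ker ≤ H) :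
    (commutator Q ⊓ H.map f).relIndex
        (Subgroup.normalizer ((H.map f : Subgroup Q) : Set Q) ⊓ commutator Q) =
      (commutator G ⊓ H).relIndex (Subgroup.normalizer (H : Set G) ⊓ commutator G) := by
  set B := Subgroup.normalizer (H : Set G) ⊓ commutator G
  have hB : B.map f = Subgroup.normalizer ((H.map f : Subgroup Q) : Set Q) ⊓ commutator Q := by
    rw [Subgroup.map_inf_of_ker_le f _ (hH.trans H.le_normalizer),
      Subgroup.map_normalizer_of_ker_le hf hH, Subgroup.map_commutator_of_surjective hf]
  rw [← hB, ← Subgroup.relIndex_comap, Subgroup.comap_inf, Subgroup.comap_map_eq_self hH,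
    ← Subgroup.map_commutator_of_surjective hf, Subgroup.comap_map_eq,
    ← Subgroup.inf_relIndex_right, ← Subgroup.inf_relIndex_right (commutator G ⊓ H)]
  congr 1
  refine le_antisymm ?_ (inf_le_inf_right _ (inf_le_inf_right _ le_sup_left))
  exact le_inf (le_inf (inf_le_right.trans inf_le_right) (inf_le_left.trans inf_le_right))
    inf_le_right

end Transfer

/-- If a quotient `G/N` of a finite group `G` does not satisfy the (μ,λ)-property, then
neither does `G`. -/
theorem not_muLambdaProperty_of_quotient (G : Type*) [Group G] [Finite G]
    (N : Subgroup G) [N.Normal]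
    (h : ¬ MuLambdaProperty (G ⧸ N)) :
    ¬ MuLambdaProperty G := by
  intro hG
  refine h fun W => ?_
  have hf := QuotientGroup.mk'_surjective N
  have hW := Subgroup.ker_le_comap (QuotientGroup.mk' N) W
  have key := hG (W.comap (QuotientGroup.mk' N))
  rwa [← muSub_map_eq hf hW, ← lamSub_map_eq hf hW, ← relIndex_commutator_inf_map_eq hf hW,
    Subgroup.map_comap_eq_self_of_surjective hf] at key
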